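/- Let γ = γ_{p,q,l} and suppose π ∈ S_{p+q+l} and σ ∈ S_NC(p,q,l) with π ≤ σ⁻¹γ. If π ∈ NC(p) × NC(q) × NC(l) (a product of three non-crossing permutations, one on each circle), then σ ≲^{(2)} γπ⁻¹: for each block B of σ ∨ γπ⁻¹ the restriction σ|_B is non-crossing with respect to (γπ⁻¹)|_B, and #(σ ∨ γπ⁻¹) = #(γπ⁻¹) − 2. -/

import Mathlib

open Equiv

namespace ThirdOrderFree

variable {α : Type*}

/-- The setoid whose classes are the cycles (orbits) of a permutation. -/
def sameCycleSetoid (σ : Perm α) : Setoid α :=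
  ⟨σ.SameCycle,
    ⟨fun x => Equiv.Perm.SameCycle.refl σ x, fun h => h.symm, fun h h' => h.trans h'⟩⟩

/-- Number of cycles (orbits, including fixed points) of a permutation. -/
noncomputable def numCycles (σ : Perm α) : ℕ :=
  Nat.card (Quotient (sameCycleSetoid σ))

/-- The length `|σ| = n - #(σ)`. -/
noncomputable def len (σ : Perm α) : ℕ :=
  Nat.card α - numCycles σ

/-- Join of the cycle partitions of two permutations. -/
def joinSetoid (π σ : Perm α) : Setoid α :=
  sameCycleSetoid π ⊔ sameCycleSetoid σ

/-- Number of blocks of `π ∨ σ`. -/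
noncomputable def numBlocks (π σ : Perm α) : ℕ :=
  Nat.card (Quotient (joinSetoid π σ))

/-- `π ∨ σ` is the one-block partition. -/
def JoinTop (π σ : Perm α) : Prop :=
  ∀ x y : α, (joinSetoid π σ).r x y

/-- `π` is a non-crossing (annular) permutation with respect to `γ`. -/
def SNC (γ π : Perm α) : Prop :=
  JoinTop π γ ∧
    numCycles π + numCycles (π⁻¹ * γ) + numCycles γ = Nat.card α + 2

/-- `τ` separates the points of `N`: no cycle of `τ` contains two distinct points of `N`. -/
def Separates (τ : Perm α) (N : Set α) : Prop :=
  ∀ x ∈ N, ∀ y ∈ N, τ.SameCycle x y → x = y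

/-- The first-return map of `σ` on the set `{x | p x}`. -/
noncomputable def firstReturn (σ : Perm α) (p : α → Prop) (x : α) : α :=
  (σ ^ sInf {k : ℕ | 0 < k ∧ p ((σ ^ k) x)}) x

open Classical in
/-- The restriction of `σ` to `{x | p x}`: the unique permutation agreeing with the
first-return map (it exists whenever `α` is finite). -/
noncomputable def restrictPerm (σ : Perm α) (p : α → Prop) : Perm {x // p x} :=
  if h : ∃ e : Perm {x // p x}, ∀ x : {x // p x}, (e x : α) = firstReturn σ p (x : α)
  then h.choose else 1

/-- `π ≤ σ` : each cycle of `π` is contained in a cycle of `σ` and on each cycle of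
`σ` the restriction of `π` is a non-crossing permutation of that cycle. -/
def le' (π σ : Perm α) : Prop :=
  (∀ x y : α, π.SameCycle x y → σ.SameCycle x y) ∧
  ∀ x : α,
    numCycles (restrictPerm π (σ.SameCycle x)) +
      numCycles ((restrictPerm π (σ.SameCycle x))⁻¹ * restrictPerm σ (σ.SameCycle x)) =
      Nat.card {y // σ.SameCycle x y} + 1

/-- `π ≲ σ` : on each block of `π ∨ σ`, `π` is annular non-crossing w.r.t. `σ`. -/
def ncRel (π σ : Perm α) : Prop :=
  ∀ x : α,
    SNC (restrictPerm σ ((joinSetoid π σ).r x)) (restrictPerm π ((joinSetoid π σ).r x))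

/-- The permutation of `Σ i, Fin (n i)` rotating each block: the product of the
directed cycles `T i` of lengths `n i`. -/
def blockRotate {ι : Type*} (n : ι → ℕ) : Perm ((i : ι) × Fin (n i)) :=
  Equiv.sigmaCongrRight fun i => finRotate (n i)

/-- The first elements of the blocks. -/
def zeroSection {ι : Type*} (n : ι → ℕ) (hn : ∀ i, 0 < n i) :
    ι ≃ {x : (i : ι) × Fin (n i) // x.2.val = 0} where
  toFun i := ⟨⟨i, ⟨0, hn i⟩⟩, rfl⟩
  invFun x := x.1.1
  left_inv i := rfl
  right_inv := fun x => by
    obtain ⟨⟨i, j⟩, hj⟩ := x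
    exact Subtype.ext (congrArg (Sigma.mk i) (Fin.ext hj.symm))

/-- `π_{\vec n}` : merge the blocks `T i` along the cycles of `π`; within a block it
moves forward, and the last element of block `i` is sent to the first element of
block `π i`. -/
def mergePerm {ι : Type*} (n : ι → ℕ) (hn : ∀ i, 0 < n i) (π : Perm ι) :
    Perm ((i : ι) × Fin (n i)) :=
  (π.extendDomain (zeroSection n hn)) * blockRotate n

/-!
Write `τ = γπ⁻¹`, `N = p + q + l`, and `#` for the number of cycles. Summing the non-crossing
condition on `π` over the three circles, and the condition `π ≤ σ⁻¹γ` over the cycles of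
`σ⁻¹γ`, and using `#(ab) = #(ba)`, gives `#π + #τ = N + 3` and `#π + #(σ⁻¹τ) = N + #(σ⁻¹γ)`;
together with `σ ∈ S_NC(p,q,l)` this yields `#σ + #(σ⁻¹τ) + #τ = N - 4 + 2#τ`.

The genus inequality `#a + #(a⁻¹c) + #c ≤ N + 2#(a ∨ c)`, proved by peeling transpositions off
`a⁻¹c`, then gives `#τ ≤ #(σ ∨ τ) + 2`. Conversely, `σ ∨ γ = 1` and the cycles of `τ` refine
both `σ ∨ τ` and the three circles, so semimodularity of the partition lattice gives
`#(σ ∨ τ) + 2 ≤ #τ`. Hence the genus inequality is an equality; being the sum of the same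
inequality over the blocks of `σ ∨ τ`, it is an equality on every block, which is the
non-crossing condition there.
-/

section Cycles

lemma sameCycleSetoid_apply (f : Perm α) (z : α) : sameCycleSetoid f z (f z) :=
  Perm.sameCycle_apply_right.2 (Perm.SameCycle.refl f z)

lemma rel_apply_iff {r : Setoid α} {f : Perm α} (hf : ∀ z, r z (f z)) (x z : α) :
    r x (f z) ↔ r x z :=
  ⟨fun h => r.trans h (r.symm (hf z)), fun h => r.trans h (hf z)⟩

lemma rel_inv_apply {r : Setoid α} {f : Perm α} (hf : ∀ z, r z (f z)) (z : α) :
    r z (f⁻¹ z) := by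
  simpa using r.symm (hf (f⁻¹ z))

lemma rel_inv_mul_apply {r : Setoid α} {f g : Perm α} (hf : ∀ z, r z (f z))
    (hg : ∀ z, r z (g z)) (z : α) : r z ((f⁻¹ * g) z) :=
  r.trans (hg z) (rel_inv_apply hf (g z))

lemma pow_mod_apply {f : Perm α} {x : α} {k : ℕ} (h : (f ^ k) x = x) (i : ℕ) :
    (f ^ (i % k)) x = (f ^ i) x := by
  rw [Perm.coe_pow, Perm.coe_pow]
  exact Function.IsPeriodicPt.iterate_mod_apply
    (by rw [Function.IsPeriodicPt, Function.IsFixedPt, ← Perm.coe_pow]; exact h) i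

lemma setoid_apply_eq_of_rel {t : Setoid α} {a b : α} (h : t a b) : t a = t b :=
  funext fun _ => propext ⟨t.trans (t.symm h), t.trans h⟩

lemma sameCycleSetoid_le [Finite α] {r : Setoid α} {f : Perm α} (hf : ∀ z, r z (f z)) :
    sameCycleSetoid f ≤ r := by
  intro x y (hxy : f.SameCycle x y)
  obtain ⟨i, -, rfl⟩ := hxy.exists_pow_eq'
  clear hxy
  induction i with
  | zero => exact r.refl' x
  | succ i ih => rw [pow_succ', Perm.mul_apply]; exact r.trans ih (hf _)

lemma card_subtype_ne_add_one {β : Type*} [Finite β] (b : β) :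
    Nat.card {c // c ≠ b} + 1 = Nat.card β := by
  classical
  have := Fintype.ofFinite β
  have := Fintype.card_pos_iff.2 ⟨b⟩
  rw [Nat.card_eq_fintype_card, Nat.card_eq_fintype_card, Fintype.card_subtype_compl,
    Fintype.card_subtype_eq]
  omega

lemma card_quotient_le_of_le [Finite α] {s t : Setoid α} (h : s ≤ t) :
    Nat.card (Quotient t) ≤ Nat.card (Quotient s) :=
  Nat.card_le_card_of_surjective (Quotient.map' id h)
    (Quotient.ind fun x => ⟨Quotient.mk s x, rfl⟩)

lemma numCycles_le_card [Finite α] (f : Perm α) : numCycles f ≤ Nat.card α :=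
  Nat.card_le_card_of_surjective _ Quotient.mk_surjective

lemma numCycles_one : numCycles (1 : Perm α) = Nat.card α :=
  (Nat.card_eq_of_bijective _ ⟨fun _ _ h => Perm.sameCycle_one.1 (Quotient.exact h),
    Quotient.mk_surjective⟩).symm

lemma numCycles_conj (g f : Perm α) : numCycles (g * f * g⁻¹) = numCycles f :=
  Nat.card_congr (Quotient.congr g⁻¹ fun x y => by
    change (g * f * g⁻¹).SameCycle x y ↔ f.SameCycle _ _
    rw [Perm.sameCycle_conj])

lemma numCycles_mul_comm (f g : Perm α) : numCycles (f * g) = numCycles (g * f) := by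
  rw [← numCycles_conj g (f * g), mul_assoc, mul_assoc, mul_inv_cancel, mul_one]

lemma SNC.nonempty {γ π : Perm α} (h : SNC γ π) : Nonempty α := by
  by_contra hα
  rw [not_nonempty_iff] at hα
  have := h.2
  simp [numCycles, Nat.card_of_isEmpty] at this

end Cycles

section Merge

def mergeSetoid (s : Setoid α) (u v : α) : Setoid α where
  r x y := s x y ∨ (s x u ∧ s v y) ∨ (s x v ∧ s u y)
  iseqv := ⟨fun x => Or.inl (s.refl' x), by grind [Setoid.symm'],
    by grind [Setoid.trans', Setoid.symm']⟩

variable {s t : Setoid α} {u v : α}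

lemma le_mergeSetoid : s ≤ mergeSetoid s u v := fun _ _ => Or.inl

lemma mergeSetoid_rel : mergeSetoid s u v u v := Or.inr (Or.inl ⟨s.refl' u, s.refl' v⟩)

lemma mergeSetoid_mono (h : s ≤ t) : mergeSetoid s u v ≤ mergeSetoid t u v := by
  rintro x y (hxy | ⟨h₁, h₂⟩ | ⟨h₁, h₂⟩)
  exacts [Or.inl (h hxy), Or.inr (Or.inl ⟨h h₁, h h₂⟩), Or.inr (Or.inr ⟨h h₁, h h₂⟩)]

lemma mergeSetoid_le (h : s ≤ t) (huv : t u v) : mergeSetoid s u v ≤ t := by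
  rintro x y (hxy | ⟨h₁, h₂⟩ | ⟨h₁, h₂⟩)
  exacts [h hxy, t.trans (h h₁) (t.trans huv (h h₂)),
    t.trans (h h₁) (t.trans (t.symm huv) (h h₂))]

variable [Finite α]

lemma card_quotient_mergeSetoid (h : ¬ s u v) :
    Nat.card (Quotient s) = Nat.card (Quotient (mergeSetoid s u v)) + 1 := by
  let Φ : {c : Quotient s // c ≠ ⟦v⟧} → Quotient (mergeSetoid s u v) :=
    fun c => Quotient.map' id (fun _ _ => Or.inl) c.1
  have hΦ : Function.Bijective Φ := by
    refine ⟨?_, Quotient.ind fun x => ?_⟩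
    · rintro ⟨c, hc⟩ ⟨d, hd⟩ hcd
      induction c using Quotient.inductionOn
      induction d using Quotient.inductionOn
      rcases Quotient.exact hcd with hxy | ⟨-, hvy⟩ | ⟨hxv, -⟩
      · exact Subtype.ext (Quotient.sound hxy)
      · exact absurd (Quotient.sound (s.symm hvy)) hd
      · exact absurd (Quotient.sound hxv) hc
    · by_cases hxv : s x v
      · exact ⟨⟨⟦u⟧, fun e => h (Quotient.exact e)⟩,
          Quotient.sound (Or.inr (Or.inl ⟨s.refl' u, s.symm hxv⟩))⟩
      · exact ⟨⟨⟦x⟧, fun e => hxv (Quotient.exact e)⟩, rfl⟩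
  rw [← Nat.card_eq_of_bijective Φ hΦ, card_subtype_ne_add_one]

lemma card_quotient_le_mergeSetoid :
    Nat.card (Quotient s) ≤ Nat.card (Quotient (mergeSetoid s u v)) + 1 := by
  by_cases h : s u v
  · have := card_quotient_le_of_le (mergeSetoid_le le_rfl h)
    omega
  · exact (card_quotient_mergeSetoid h).le

theorem card_quotient_add_card_quotient_le (t u : Setoid α) (h : t ⊔ u = ⊤) :
    Nat.card (Quotient t) + Nat.card (Quotient u) ≤ Nat.card (Quotient (t ⊓ u)) + 1 := by
  by_cases hut : u ≤ t
  · rw [sup_eq_left.2 hut] at h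
    have : Subsingleton (Quotient t) :=
      ⟨Quotient.ind₂ fun x y => Quotient.sound (show t x y by rw [h]; trivial)⟩
    rw [inf_eq_right.2 hut]
    have := Finite.card_le_one_iff_subsingleton.2 this
    omega
  obtain ⟨x, y, hu, ht⟩ : ∃ x y, u x y ∧ ¬ t x y := by
    simpa [Setoid.le_def] using hut
  -- Merging the `t`-classes of `x` and `y` lowers `#t` by one and `#(t ⊓ u)` by at least one.
  have hmerge := card_quotient_mergeSetoid ht
  have ih := card_quotient_add_card_quotient_le (mergeSetoid t x y) u
    (top_unique (h ▸ sup_le_sup_right le_mergeSetoid u))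
  have hmerge_inf := card_quotient_mergeSetoid (s := t ⊓ u) fun h' => ht (Setoid.inf_iff_and.1 h').1
  have hle_inf := card_quotient_le_of_le
    (mergeSetoid_le (inf_le_inf_right u (le_mergeSetoid (s := t)))
      (Setoid.inf_iff_and.2 ⟨mergeSetoid_rel, hu⟩))
  omega
termination_by Nat.card (Quotient t)

end Merge

section Swap

variable [DecidableEq α] {σ : Perm α} {a b : α}

lemma swap_mul_pow_succ_apply {k : ℕ}
    (hk : ∀ j, 0 < j → j < k → (σ ^ j) a ≠ a ∧ (σ ^ j) a ≠ b) :
    ∀ j < k, ((swap a b * σ) ^ (j + 1)) a = swap a b ((σ ^ (j + 1)) a)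
  | 0, _ => rfl
  | j + 1, hj => by
    obtain ⟨ha, hb⟩ := hk (j + 1) j.succ_pos (by omega)
    rw [pow_succ', Perm.mul_apply, swap_mul_pow_succ_apply hk j (by omega),
      swap_apply_of_ne_of_ne ha hb, pow_succ' σ (j + 1), Perm.mul_apply, Perm.mul_apply]

variable [Finite α]

lemma sameCycleSetoid_le_mergeSetoid_swap_mul (σ : Perm α) (a b : α) :
    sameCycleSetoid σ ≤ mergeSetoid (sameCycleSetoid (swap a b * σ)) a b := by
  refine sameCycleSetoid_le fun z => ?_
  have hz := sameCycleSetoid_apply (swap a b * σ) z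
  rw [show σ z = swap a b ((swap a b * σ) z) by simp, swap_apply_def]
  split_ifs with ha hb
  · rw [ha] at hz; exact Or.inr (Or.inl ⟨hz, Perm.SameCycle.refl _ b⟩)
  · rw [hb] at hz; exact Or.inr (Or.inr ⟨hz, Perm.SameCycle.refl _ a⟩)
  · exact Or.inl hz

lemma sameCycleSetoid_swap_mul_le (h : σ.SameCycle a b) :
    sameCycleSetoid (swap a b * σ) ≤ sameCycleSetoid σ := by
  refine sameCycleSetoid_le fun z => ?_
  have hz : σ.SameCycle z (σ z) := sameCycleSetoid_apply σ z
  rw [Perm.mul_apply, swap_apply_def]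
  split_ifs with ha hb
  · rw [ha] at hz; exact hz.trans h
  · rw [hb] at hz; exact hz.trans h.symm
  · exact hz

lemma not_sameCycle_swap_mul (hab : a ≠ b) (h : σ.SameCycle a b) :
    ¬ (swap a b * σ).SameCycle a b := by
  -- With `k` the first time the `σ`-orbit of `a` reaches `b`, the orbit of `a` under
  -- `swap a b * σ` closes up after `k` steps without meeting `b`.
  have hex : ∃ k, 0 < k ∧ (σ ^ k) a = b := by
    obtain ⟨k, hk, -, e⟩ := h.exists_pow_eq''
    exact ⟨k, hk, e⟩
  obtain ⟨hkpos, hkb⟩ := Nat.find_spec hex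
  set k := Nat.find hex
  have hmin : ∀ j, 0 < j → j < k → (σ ^ j) a ≠ b := fun j hj hjk e =>
    Nat.find_min hex hjk ⟨hj, e⟩
  have hk : ∀ j, 0 < j → j < k → (σ ^ j) a ≠ a ∧ (σ ^ j) a ≠ b := by
    refine fun j hj hjk => ⟨fun e => hmin (k - j) (by omega) (by omega) ?_, hmin j hj hjk⟩
    conv_lhs => rw [← e]
    rw [← Perm.mul_apply, ← pow_add, Nat.sub_add_cancel hjk.le, hkb]
  have hρk : ((swap a b * σ) ^ k) a = a := by
    have := swap_mul_pow_succ_apply hk (k - 1) (by omega)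
    rwa [Nat.sub_add_cancel hkpos, hkb, swap_apply_right] at this
  have hne : ∀ j < k, ((swap a b * σ) ^ j) a ≠ b
    | 0, _ => hab
    | j + 1, hj => by
      obtain ⟨ha, hb⟩ := hk (j + 1) j.succ_pos hj
      rwa [swap_mul_pow_succ_apply hk j (by omega), swap_apply_of_ne_of_ne ha hb]
  intro hc
  obtain ⟨i, -, hi⟩ := hc.exists_pow_eq'
  exact hne (i % k) (Nat.mod_lt _ hkpos) (by rwa [pow_mod_apply hρk])

lemma sameCycle_swap_mul_of_not_sameCycle (h : ¬ σ.SameCycle a b) :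
    (swap a b * σ).SameCycle a b := by
  -- After the period `k` of `a` under `σ`, the orbit of `a` under `swap a b * σ` reaches `b`.
  have hex : ∃ k, 0 < k ∧ (σ ^ k) a = a :=
    ⟨orderOf σ, orderOf_pos σ, by rw [pow_orderOf_eq_one, Perm.one_apply]⟩
  obtain ⟨hkpos, hka⟩ := Nat.find_spec hex
  set k := Nat.find hex
  have hk : ∀ j, 0 < j → j < k → (σ ^ j) a ≠ a ∧ (σ ^ j) a ≠ b := fun j hj hjk =>
    ⟨fun e => Nat.find_min hex hjk ⟨hj, e⟩,
      fun e => h (e ▸ Perm.sameCycle_pow_right.2 (Perm.SameCycle.refl σ a))⟩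
  have hρk : ((swap a b * σ) ^ k) a = b := by
    have := swap_mul_pow_succ_apply hk (k - 1) (by omega)
    rwa [Nat.sub_add_cancel hkpos, hka, swap_apply_left] at this
  exact ⟨k, by rwa [zpow_natCast]⟩

lemma numCycles_swap_mul_of_sameCycle (hab : a ≠ b) (h : σ.SameCycle a b) :
    numCycles (swap a b * σ) = numCycles σ + 1 := by
  have hσ : sameCycleSetoid σ = mergeSetoid (sameCycleSetoid (swap a b * σ)) a b :=
    le_antisymm (sameCycleSetoid_le_mergeSetoid_swap_mul σ a b)
      (mergeSetoid_le (sameCycleSetoid_swap_mul_le h) h)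
  rw [numCycles, numCycles, hσ]
  exact card_quotient_mergeSetoid (not_sameCycle_swap_mul hab h)

lemma numCycles_swap_mul_of_not_sameCycle (h : ¬ σ.SameCycle a b) :
    numCycles σ = numCycles (swap a b * σ) + 1 := by
  have hab : a ≠ b := by
    rintro rfl
    exact h (Perm.SameCycle.refl σ a)
  simpa using numCycles_swap_mul_of_sameCycle hab (sameCycle_swap_mul_of_not_sameCycle h)

end Swap

section Join

lemma joinSetoid_apply_left (A B : Perm α) (z : α) : joinSetoid A B z (A z) :=
  le_sup_left (a := sameCycleSetoid A) (sameCycleSetoid_apply A z)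

lemma joinSetoid_apply_right (A B : Perm α) (z : α) : joinSetoid A B z (B z) :=
  le_sup_right (b := sameCycleSetoid B) (sameCycleSetoid_apply B z)

lemma numBlocks_eq_one_of_joinTop [Nonempty α] {A B : Perm α} (h : JoinTop A B) :
    numBlocks A B = 1 :=
  Nat.card_eq_one_iff_unique.2
    ⟨⟨Quotient.ind₂ fun x y => Quotient.sound (h x y)⟩, ⟨⟦Classical.arbitrary α⟧⟩⟩

variable [Finite α]

lemma sameCycleSetoid_mul_le_joinSetoid (A B : Perm α) :
    sameCycleSetoid (A * B) ≤ joinSetoid A B :=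
  sameCycleSetoid_le fun z =>
    (joinSetoid A B).trans (joinSetoid_apply_right A B z) (joinSetoid_apply_left A B (B z))

lemma joinSetoid_mul_right (A B : Perm α) : joinSetoid A (A * B) = joinSetoid A B := by
  refine le_antisymm (sup_le le_sup_left (sameCycleSetoid_mul_le_joinSetoid A B))
    (sup_le le_sup_left (sameCycleSetoid_le fun z => ?_))
  have h : joinSetoid A (A * B) ((A * B) z) (B z) := by
    simpa using rel_inv_apply (joinSetoid_apply_left A (A * B)) ((A * B) z)
  exact (joinSetoid A (A * B)).trans (joinSetoid_apply_right A (A * B) z) h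

lemma numBlocks_one_right (A : Perm α) : numBlocks A 1 = numCycles A := by
  rw [numBlocks, joinSetoid,
    sup_eq_left.2 (sameCycleSetoid_le fun z => (sameCycleSetoid A).refl' z)]
  rfl

lemma joinSetoid_le_mergeSetoid_swap_mul [DecidableEq α] (A B : Perm α) (u v : α) :
    joinSetoid A B ≤ mergeSetoid (joinSetoid A (swap u v * B)) u v :=
  sup_le (le_sup_left.trans le_mergeSetoid)
    ((sameCycleSetoid_le_mergeSetoid_swap_mul B u v).trans (mergeSetoid_mono le_sup_right))

/-- The genus of the hypermap `(A, B)` is nonnegative. -/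
theorem numCycles_add_numCycles_add_numCycles_mul_le (A B : Perm α) :
    numCycles A + numCycles B + numCycles (A * B) ≤ Nat.card α + 2 * numBlocks A B := by
  classical
  by_cases hB : B = 1
  · subst hB
    rw [mul_one, numCycles_one, numBlocks_one_right]
    omega
  obtain ⟨u, hu⟩ : ∃ u, B u ≠ u := not_forall.1 fun h => hB (Equiv.ext h)
  obtain ⟨B', hB'⟩ : ∃ B', swap u (B u) * B = B' := ⟨_, rfl⟩
  have hcard : numCycles B' = numCycles B + 1 :=
    hB' ▸ numCycles_swap_mul_of_sameCycle (Ne.symm hu) (sameCycleSetoid_apply B u)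
  have hAB' : A * B' = swap (A u) (A (B u)) * (A * B) := by
    rw [← hB', swap_apply_apply]
    group
  have hAB : A * B = swap (A u) (A (B u)) * (A * B') := by
    rw [hAB', swap_mul_self_mul]
  have hmerge := card_quotient_le_of_le (hB' ▸ joinSetoid_le_mergeSetoid_swap_mul A B u (B u))
  have ih := numCycles_add_numCycles_add_numCycles_mul_le A B'
  by_cases hc : (A * B).SameCycle (A u) (A (B u))
  · have hAB'card : numCycles (A * B') = numCycles (A * B) + 1 := by
      rw [hAB']
      exact numCycles_swap_mul_of_sameCycle (A.injective.ne (Ne.symm hu)) hc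
    have := card_quotient_le_mergeSetoid (s := joinSetoid A B') (u := u) (v := B u)
    unfold numBlocks at *
    omega
  · have hABcard : numCycles (A * B) = numCycles (A * B') + 1 := by
      rw [hAB']
      exact numCycles_swap_mul_of_not_sameCycle hc
    -- Otherwise `A u` and `A (B u)` would lie in different cycles of `A * B'`, and the
    -- transposition would join them into one cycle of `A * B`.
    have huv : joinSetoid A B' u (B u) := by
      set J := joinSetoid A B'
      by_contra h
      rw [hAB] at hc
      refine hc (sameCycle_swap_mul_of_not_sameCycle fun h' => h ?_)
      exact J.trans (joinSetoid_apply_left A B' u) (J.trans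
        (sameCycleSetoid_mul_le_joinSetoid A B' h') (J.symm (joinSetoid_apply_left A B' (B u))))
    have := card_quotient_le_of_le (mergeSetoid_le le_rfl huv)
    unfold numBlocks at *
    omega
termination_by Nat.card α - numCycles B
decreasing_by
  have := numCycles_le_card B'
  omega

theorem numCycles_add_numCycles_inv_mul_add_le (A C : Perm α) :
    numCycles A + numCycles (A⁻¹ * C) + numCycles C ≤ Nat.card α + 2 * numBlocks A C := by
  have h := numCycles_add_numCycles_add_numCycles_mul_le A (A⁻¹ * C)
  rwa [mul_inv_cancel_left, numBlocks, ← joinSetoid_mul_right, mul_inv_cancel_left] at h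

end Join

section Restrict

variable {σ τ : Perm α} {p : α → Prop}

lemma firstReturn_eq_apply (hp : ∀ x, p (σ x) ↔ p x) {x : α} (hx : p x) :
    firstReturn σ p x = σ x := by
  have h1 : 1 ∈ {k : ℕ | 0 < k ∧ p ((σ ^ k) x)} := ⟨one_pos, by rwa [pow_one, hp]⟩
  rw [firstReturn, le_antisymm (Nat.sInf_le h1) (Nat.sInf_mem ⟨1, h1⟩).1, pow_one]

lemma restrictPerm_eq_subtypePerm (hp : ∀ x, p (σ x) ↔ p x) :
    restrictPerm σ p = σ.subtypePerm hp := by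
  have hex : ∃ e : Perm {x // p x}, ∀ x : {x // p x}, (e x : α) = firstReturn σ p x :=
    ⟨σ.subtypePerm hp, fun x => (firstReturn_eq_apply hp x.2).symm⟩
  rw [restrictPerm, dif_pos hex]
  ext x
  rw [hex.choose_spec, firstReturn_eq_apply hp x.2]
  rfl

lemma restrictPerm_inv_mul (hσ : ∀ x, p (σ x) ↔ p x) (hτ : ∀ x, p (τ x) ↔ p x) :
    restrictPerm (σ⁻¹ * τ) p = (restrictPerm σ p)⁻¹ * restrictPerm τ p := by
  have hσ' : ∀ x, p (σ⁻¹ x) ↔ p x := fun x => by simpa using (hσ (σ⁻¹ x)).symm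
  rw [restrictPerm_eq_subtypePerm hσ, restrictPerm_eq_subtypePerm hτ,
    restrictPerm_eq_subtypePerm fun x => (hσ' (τ x)).trans (hτ x)]
  rfl

lemma numCycles_restrictPerm_sameCycleSetoid (f : Perm α) (x : α) :
    numCycles (restrictPerm f (sameCycleSetoid f x)) = 1 := by
  rw [restrictPerm_eq_subtypePerm (p := sameCycleSetoid f x) fun _ => Perm.sameCycle_apply_right,
    numCycles, Nat.card_eq_one_iff_unique]
  exact ⟨⟨Quotient.ind₂ fun a b => Quotient.sound
    (Perm.sameCycle_subtypePerm.2 ((a.2 : f.SameCycle x a).symm.trans b.2))⟩,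
    ⟨⟦⟨x, Perm.SameCycle.refl f x⟩⟧⟩⟩

end Restrict

section Blocks

variable [Finite α]

lemma card_eq_sum_card_class (t : Setoid α) [Fintype (Quotient t)] :
    Nat.card α = ∑ c : Quotient t, Nat.card {y // t c.out y} := by
  rw [← Nat.card_sigma]
  exact Nat.card_congr ((Equiv.sigmaFiberEquiv (Quotient.mk t)).symm.trans
    (Equiv.sigmaCongrRight fun c => Equiv.subtypeEquivRight fun y =>
      Quotient.mk_eq_iff_out.trans ⟨t.symm, t.symm⟩))

lemma card_quotient_eq_sum {s t : Setoid α} (h : s ≤ t) [Fintype (Quotient t)] :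
    Nat.card (Quotient s) =
      ∑ c : Quotient t, Nat.card (Quotient (s.comap (Subtype.val : {y // t c.out y} → α))) := by
  let Φ : Quotient s → Quotient t := Quotient.map' id h
  let F (c : Quotient t) :
      Quotient (s.comap (Subtype.val : {y // t c.out y} → α)) → {d // Φ d = c} :=
    Quotient.lift (fun y => ⟨⟦y.1⟧, Quotient.mk_eq_iff_out.2 (t.symm y.2)⟩)
      fun _ _ hab => Subtype.ext (Quotient.sound hab)
  have hF (c : Quotient t) : Function.Bijective (F c) := by
    refine ⟨?_, ?_⟩
    · rintro ⟨a⟩ ⟨b⟩ hab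
      exact Quotient.sound
        (Quotient.exact (s := s) (a := a.1) (b := b.1) (congrArg Subtype.val hab))
    · rintro ⟨d, hd⟩
      induction d using Quotient.inductionOn with | h w => ?_
      exact ⟨⟦⟨w, t.symm (Quotient.mk_eq_iff_out.1 hd)⟩⟧, rfl⟩
  rw [← Nat.card_sigma]
  exact Nat.card_congr ((Equiv.sigmaFiberEquiv Φ).symm.trans
    (Equiv.sigmaCongrRight fun c => (Equiv.ofBijective (F c) (hF c)).symm))

lemma numCycles_eq_sum_restrictPerm (t : Setoid α) [Fintype (Quotient t)] {f : Perm α}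
    (hf : ∀ z, t z (f z)) :
    numCycles f = ∑ c : Quotient t, numCycles (restrictPerm f (t c.out)) := by
  rw [numCycles, card_quotient_eq_sum (sameCycleSetoid_le hf)]
  refine Finset.sum_congr rfl fun c _ => ?_
  rw [restrictPerm_eq_subtypePerm (rel_apply_iff hf c.out), numCycles]
  congr 2
  exact Setoid.ext fun a b => Perm.sameCycle_subtypePerm.symm

theorem numCycles_add_numCycles_inv_mul_eq (t : Setoid α) {π ρ : Perm α}
    (hπ : ∀ z, t z (π z)) (hρ : ∀ z, t z (ρ z))
    (h : ∀ x, numCycles (restrictPerm π (t x)) +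
      numCycles ((restrictPerm π (t x))⁻¹ * restrictPerm ρ (t x)) = Nat.card {y // t x y} + 1) :
    numCycles π + numCycles (π⁻¹ * ρ) = Nat.card α + Nat.card (Quotient t) := by
  have := Fintype.ofFinite (Quotient t)
  rw [numCycles_eq_sum_restrictPerm t hπ,
    numCycles_eq_sum_restrictPerm t (rel_inv_mul_apply hπ hρ), card_eq_sum_card_class t,
    Nat.card_eq_fintype_card, ← Finset.card_univ, Finset.card_eq_sum_ones, ← Finset.sum_add_distrib, ← Finset.sum_add_distrib]
  refine Finset.sum_congr rfl fun c _ => ?_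
  rw [restrictPerm_inv_mul (rel_apply_iff hπ c.out) (rel_apply_iff hρ c.out)]
  exact h c.out

lemma joinTop_restrictPerm_joinSetoid (σ τ : Perm α) (x : α) :
    JoinTop (restrictPerm σ (joinSetoid σ τ x)) (restrictPerm τ (joinSetoid σ τ x)) := by
  classical
  set t := joinSetoid σ τ
  rw [restrictPerm_eq_subtypePerm (rel_apply_iff (joinSetoid_apply_left σ τ) x),
    restrictPerm_eq_subtypePerm (rel_apply_iff (joinSetoid_apply_right σ τ) x)]
  set J := joinSetoid (σ.subtypePerm _) (τ.subtypePerm _)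
  -- Retract `α` onto the block of `x`; both `σ` and `τ` respect the pull-back of `J`.
  let g : α → {y // t x y} := fun y => if hy : t x y then ⟨y, hy⟩ else ⟨x, t.refl' x⟩
  have key {f : Perm α} (hf : ∀ z, t z (f z))
      (hJ : sameCycleSetoid (f.subtypePerm (rel_apply_iff hf x)) ≤ J) :
      sameCycleSetoid f ≤ J.comap g := by
    refine sameCycleSetoid_le fun z => ?_
    by_cases hz : t x z
    · have hfz : t x (f z) := (rel_apply_iff hf x z).2 hz
      simp only [Setoid.comap_rel, g, dif_pos hz, dif_pos hfz]
      exact hJ (sameCycleSetoid_apply (f.subtypePerm (rel_apply_iff hf x)) ⟨z, hz⟩)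
    · have hfz : ¬ t x (f z) := mt (rel_apply_iff hf x z).1 hz
      simp only [Setoid.comap_rel, g, dif_neg hz, dif_neg hfz]
      exact J.refl' _
  intro a b
  have := sup_le (key (joinSetoid_apply_left σ τ) le_sup_left)
    (key (joinSetoid_apply_right σ τ) le_sup_right) (t.trans (t.symm a.2) b.2)
  simp only [Setoid.comap_rel, g, dif_pos a.2, dif_pos b.2] at this
  exact this

theorem ncRel_of_card_add_le {σ τ : Perm α}
    (h : Nat.card α + 2 * numBlocks σ τ ≤ numCycles σ + numCycles (σ⁻¹ * τ) + numCycles τ) :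
    ncRel σ τ := by
  set t := joinSetoid σ τ
  have := Fintype.ofFinite (Quotient t)
  have hσ := joinSetoid_apply_left σ τ
  have hτ := joinSetoid_apply_right σ τ
  have hinv (x : α) : restrictPerm (σ⁻¹ * τ) (t x) =
      (restrictPerm σ (t x))⁻¹ * restrictPerm τ (t x) :=
    restrictPerm_inv_mul (rel_apply_iff hσ x) (rel_apply_iff hτ x)
  have hblock (x : α) : numCycles (restrictPerm σ (t x)) + numCycles (restrictPerm (σ⁻¹ * τ) (t x))
      + numCycles (restrictPerm τ (t x)) ≤ Nat.card {y // t x y} + 2 := by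
    have : Nonempty {y // t x y} := ⟨⟨x, t.refl' x⟩⟩
    have := numCycles_add_numCycles_inv_mul_add_le (restrictPerm σ (t x)) (restrictPerm τ (t x))
    rwa [numBlocks_eq_one_of_joinTop (joinTop_restrictPerm_joinSetoid σ τ x), ← hinv] at this
  have hle : ∑ c : Quotient t, (Nat.card {y // t c.out y} + 2) ≤
      ∑ c : Quotient t, (numCycles (restrictPerm σ (t c.out)) +
        numCycles (restrictPerm (σ⁻¹ * τ) (t c.out)) + numCycles (restrictPerm τ (t c.out))) := by
    rw [Finset.sum_add_distrib, Finset.sum_add_distrib, Finset.sum_add_distrib,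
      ← numCycles_eq_sum_restrictPerm t hσ, ← numCycles_eq_sum_restrictPerm t hτ,
      ← numCycles_eq_sum_restrictPerm t (rel_inv_mul_apply hσ hτ), ← card_eq_sum_card_class,
      Finset.sum_const, Finset.card_univ, ← Nat.card_eq_fintype_card, smul_eq_mul]
    have : numBlocks σ τ = Nat.card (Quotient t) := rfl
    omega
  -- The block-wise inequalities add up to the reverse of `h`, so each is an equality.
  have hsum := (Finset.sum_eq_sum_iff_of_le fun (c : Quotient t) _ => hblock c.out).1
    (le_antisymm (Finset.sum_le_sum fun c _ => hblock c.out) hle)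
  intro x
  have hx := hsum ⟦x⟧ (Finset.mem_univ _)
  rw [setoid_apply_eq_of_rel (Quotient.mk_out x), hinv] at hx
  exact ⟨joinTop_restrictPerm_joinSetoid σ τ x, hx⟩

theorem numBlocks_add_numCycles_le {σ τ γ : Perm α} (hσγ : JoinTop σ γ)
    (hτγ : sameCycleSetoid τ ≤ sameCycleSetoid γ) :
    numBlocks σ τ + numCycles γ ≤ numCycles τ + 1 := by
  have htop : joinSetoid σ τ ⊔ sameCycleSetoid γ = ⊤ :=
    eq_top_iff.2 fun x y _ => (sup_le (le_sup_left.trans le_sup_left) le_sup_right :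
      joinSetoid σ γ ≤ joinSetoid σ τ ⊔ sameCycleSetoid γ) (hσγ x y)
  have := card_quotient_add_card_quotient_le _ _ htop
  have := card_quotient_le_of_le
    (le_inf le_sup_right hτγ : sameCycleSetoid τ ≤ joinSetoid σ τ ⊓ sameCycleSetoid γ)
  unfold numBlocks numCycles
  omega

end Blocks

section BlockRotate

lemma sameCycle_finRotate {m : ℕ} (j j' : Fin m) : (finRotate m).SameCycle j j' := by
  match m with
  | 1 => exact Subsingleton.elim j j' ▸ Perm.SameCycle.refl _ _
  | k + 2 =>
    have hmove (z : Fin (k + 2)) : finRotate (k + 2) z ≠ z :=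
      Perm.mem_support.1 (support_finRotate ▸ Finset.mem_univ z)
    exact isCycle_finRotate.sameCycle (hmove j) (hmove j')

variable {ι : Type*} [Finite ι]

lemma sameCycleSetoid_blockRotate (n : ι → ℕ) :
    sameCycleSetoid (blockRotate n) = Setoid.ker Sigma.fst := by
  refine le_antisymm (sameCycleSetoid_le fun _ => rfl) ?_
  rintro ⟨i, j⟩ ⟨i', j'⟩ (rfl : i = i')
  obtain ⟨k, hk⟩ := sameCycle_finRotate j j'
  refine ⟨k, ?_⟩
  change (Perm.sigmaCongrRightHom _ (fun i => finRotate (n i)) ^ k) ⟨i, j⟩ = ⟨i, j'⟩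
  rw [← map_zpow]
  exact congrArg (Sigma.mk i) hk

lemma numCycles_blockRotate {n : ι → ℕ} (hn : ∀ i, 0 < n i) :
    numCycles (blockRotate n) = Nat.card ι := by
  rw [numCycles, sameCycleSetoid_blockRotate]
  exact Nat.card_congr (Setoid.quotientKerEquivOfSurjective _ fun i => ⟨⟨i, ⟨0, hn i⟩⟩, rfl⟩)

lemma sameCycleSetoid_mul_inv_le_blockRotate {n : ι → ℕ} {π : Perm ((i : ι) × Fin (n i))}
    (hπ : ∀ x, (π x).1 = x.1) :
    sameCycleSetoid (blockRotate n * π⁻¹) ≤ sameCycleSetoid (blockRotate n) := by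
  rw [sameCycleSetoid_blockRotate]
  refine sameCycleSetoid_le fun z => ?_
  change z.1 = (π⁻¹ z).1
  simpa using hπ (π⁻¹ z)

theorem numCycles_add_numCycles_inv_mul_blockRotate {n : ι → ℕ} {π : Perm ((i : ι) × Fin (n i))}
    (hπ : ∀ x, (π x).1 = x.1)
    (hπnc : ∀ i, SNC (restrictPerm (blockRotate n) (fun x => x.1 = i))
      (restrictPerm π (fun x => x.1 = i))) :
    numCycles π + numCycles (π⁻¹ * blockRotate n) =
      Nat.card ((i : ι) × Fin (n i)) + numCycles (blockRotate n) := by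
  have hcircle := sameCycleSetoid_blockRotate n
  refine numCycles_add_numCycles_inv_mul_eq _ (fun z => ?_) (sameCycleSetoid_apply _) fun x => ?_
  · rw [hcircle]
    exact (hπ z).symm
  · have hone := numCycles_restrictPerm_sameCycleSetoid (blockRotate n) x
    have hx : sameCycleSetoid (blockRotate n) x = fun y => y.1 = x.1 := by
      rw [hcircle]
      exact funext fun y => propext eq_comm
    rw [hx] at hone ⊢
    beta_reduce
    have := (hπnc x.1).2
    omega

end BlockRotate

/-- if `σ ∈ S_NC(p,q,l)`, `π ≤ σ⁻¹γ` and `π ∈ NC(p) × NC(q) × NC(l)`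
(each circle is `π`-invariant and the restriction of `π` to each circle is
non-crossing w.r.t. that circle), then `σ ≲⁽²⁾ γπ⁻¹`. -/
theorem stmt19 (p q l : ℕ)
    (γ : Equiv.Perm ((i : Fin 3) × Fin (![p, q, l] i)))
    (hγ : γ = blockRotate ![p, q, l])
    (π σ : Equiv.Perm ((i : Fin 3) × Fin (![p, q, l] i)))
    (hσ : SNC γ σ) (hle : le' π (σ⁻¹ * γ))
    (hπ1 : ∀ x, (π x).1 = x.1)
    (hπ2 : ∀ i : Fin 3,
      SNC (restrictPerm γ (fun x => x.1 = i)) (restrictPerm π (fun x => x.1 = i))) :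
    ncRel σ (γ * π⁻¹) ∧ numBlocks σ (γ * π⁻¹) + 2 = numCycles (γ * π⁻¹) := by
  have hpos (i : Fin 3) : 0 < ![p, q, l] i := by
    obtain ⟨⟨⟨j, k⟩, rfl⟩⟩ := (hπ2 i).nonempty
    exact k.pos
  have hγ3 : numCycles γ = 3 := by simp [hγ, numCycles_blockRotate hpos]
  have hπ : numCycles π + numCycles (γ * π⁻¹) =
      Nat.card ((i : Fin 3) × Fin (![p, q, l] i)) + numCycles γ := by
    rw [numCycles_mul_comm γ]
    subst hγ
    exact numCycles_add_numCycles_inv_mul_blockRotate hπ1 hπ2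
  have hπσ : numCycles π + numCycles (σ⁻¹ * (γ * π⁻¹)) =
      Nat.card ((i : Fin 3) × Fin (![p, q, l] i)) + numCycles (σ⁻¹ * γ) := by
    rw [← mul_assoc, numCycles_mul_comm _ π⁻¹]
    exact numCycles_add_numCycles_inv_mul_eq _
      (fun z => hle.1 z (π z) (sameCycleSetoid_apply π z)) (sameCycleSetoid_apply _) hle.2
  have hblocks : numBlocks σ (γ * π⁻¹) + numCycles γ ≤ numCycles (γ * π⁻¹) + 1 := by
    refine numBlocks_add_numCycles_le hσ.1 ?_
    subst hγ
    exact sameCycleSetoid_mul_inv_le_blockRotate hπ1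
  have hgenus := numCycles_add_numCycles_inv_mul_add_le σ (γ * π⁻¹)
  have hσγ := hσ.2
  have hb : numBlocks σ (γ * π⁻¹) + 2 = numCycles (γ * π⁻¹) := by omega
  exact ⟨ncRel_of_card_add_le (by omega), hb⟩

end ThirdOrderFree
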